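/- arXiv:1105.2401 — 4 statements merged into one kernel-verified Lean document; each statement's English description precedes it below -/
import Mathlib

section
/- Let (X,d,≤) be an ordered metric space satisfying (b03): for every x,y ∈ X there exists a <>-chain between x and y, and let e be the associated chain metric, e(x,y) = inf{ d(z_1,z_2)+…+d(z_{k−1},z_k) : z_1,…,z_k a <>-chain between x and y }. Assume d is complete and (a06): every <>-ascending sequence (x_n) that d-converges to x has a subsequence (x_{q(n)}) with x_{q(n)} <> x for all n. Then the metric e is complete on X. -/
/-!
Since `d ≤ e`, an `e`-Cauchy sequence `(x n)` is `d`-Cauchy and has a `d`-limit `L`. Gluing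
near-optimal `<>`-chains from `x k` to `x (k + 1)` end to end gives a `<>`-ascending sequence `z`
whose `n`-th term is `e`-close to `x (κ n)`, with `κ n → ∞`. So `z` also `d`-converges to `L`,
and (a06) gives a subsequence of `z` comparable to `L`, along which `e = d` tends to `0`. Hence
`(x n)` has a subsequence `e`-converging to `L`, and, being `e`-Cauchy, it `e`-converges to `L`.
-/

open Filter Topology

/-- A `<>`-chain between `x` and `y`: a finite list `z₁,…,z_k` (`k ≥ 2`) with
`z₁ = x`, `z_k = y`, and consecutive terms comparable. -/
def IsChainBetween {X : Type*} [PartialOrder X] (l : List X) (x y : X) : Prop :=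
  2 ≤ l.length ∧ l.head? = some x ∧ l.getLast? = some y ∧
    l.Chain' (fun a b : X => a ≤ b ∨ b ≤ a)

/-- The sum `d(z₁,z₂) + … + d(z_{k-1},z_k)` of consecutive distances along a list. -/
def chainLength {X : Type*} [MetricSpace X] (l : List X) : ℝ :=
  ((l.zip l.tail).map fun p => dist p.1 p.2).sum

/-- The chain metric `e(x,y)` — the infimum of lengths of `<>`-chains joining `x` to `y`. -/
noncomputable def chainDist {X : Type*} [MetricSpace X] [PartialOrder X] (x y : X) : ℝ :=
  sInf {s : ℝ | ∃ l : List X, IsChainBetween l x y ∧ s = chainLength l}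

section Chains

variable {X : Type*}

lemma isChainBetween_iff [PartialOrder X] {l : List X} {x y : X} :
    IsChainBetween l x y ↔ 2 ≤ l.length ∧ l.head? = some x ∧ l.getLast? = some y ∧
      l.IsChain (fun a b : X => a ≤ b ∨ b ≤ a) :=
  Iff.rfl

lemma isChainBetween_map_range_iff [PartialOrder X] {g : ℕ → X} {m : ℕ} {x y : X} :
    IsChainBetween ((List.range (m + 1)).map g) x y ↔
      0 < m ∧ g 0 = x ∧ g m = y ∧ ∀ i < m, g i ≤ g (i + 1) ∨ g (i + 1) ≤ g i := by
  simp [isChainBetween_iff, List.isChain_map, List.isChain_range_succ, List.head?_range,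
    List.getLast?_range, Nat.one_le_iff_ne_zero, Nat.pos_iff_ne_zero]

lemma IsChainBetween.eq_map_range [PartialOrder X] {l : List X} {x y : X}
    (h : IsChainBetween l x y) :
    l = (List.range (l.length - 1 + 1)).map (l.getD · x) := by
  have hlen := h.1
  refine List.ext_getElem (by rw [List.length_map, List.length_range]; omega) fun i h₁ _ => ?_
  simp [List.getD_eq_getElem?_getD, h₁]

variable [MetricSpace X]

lemma chainLength_nonneg (l : List X) : 0 ≤ chainLength l :=
  List.sum_nonneg (by simp only [List.mem_map]; rintro _ ⟨p, -, rfl⟩; exact dist_nonneg)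

lemma chainLength_cons_of_ne_nil (a : X) {l : List X} (hl : l ≠ []) :
    chainLength (a :: l) = dist a (l.head hl) + chainLength l := by
  obtain ⟨b, t, rfl⟩ := List.exists_cons_of_ne_nil hl
  simp [chainLength]

lemma chainLength_map_range (g : ℕ → X) (m : ℕ) :
    chainLength ((List.range (m + 1)).map g) = ∑ i ∈ Finset.range m, dist (g i) (g (i + 1)) := by
  induction m generalizing g with
  | zero => simp [chainLength]
  | succ m ih =>
    rw [List.range_succ_eq_map, List.map_cons, List.map_map,
      chainLength_cons_of_ne_nil _ (by simp), ih, Finset.sum_range_succ']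
    simp [List.range_succ_eq_map, add_comm]

variable [PartialOrder X]

lemma IsChainBetween.exists_fun {l : List X} {x y : X} (h : IsChainBetween l x y) :
    ∃ (m : ℕ) (g : ℕ → X), 0 < m ∧ g 0 = x ∧ g m = y ∧
      (∀ i < m, g i ≤ g (i + 1) ∨ g (i + 1) ≤ g i) ∧
      chainLength l = ∑ i ∈ Finset.range m, dist (g i) (g (i + 1)) := by
  have hl := h.eq_map_range
  rw [hl] at h
  obtain ⟨hm, h0, hm', hcomp⟩ := isChainBetween_map_range_iff.1 h
  exact ⟨_, _, hm, h0, hm', hcomp, (congrArg chainLength hl).trans (chainLength_map_range _ _)⟩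

end Chains

section ChainDist

variable {X : Type*} [MetricSpace X] [PartialOrder X]

lemma bddBelow_chainLengths (x y : X) :
    BddBelow {s : ℝ | ∃ l : List X, IsChainBetween l x y ∧ s = chainLength l} :=
  ⟨0, by rintro _ ⟨l, -, rfl⟩; exact chainLength_nonneg l⟩

lemma chainDist_le_sum {g : ℕ → X} {m : ℕ} (hg : ∀ i < m, g i ≤ g (i + 1) ∨ g (i + 1) ≤ g i) :
    chainDist (g 0) (g m) ≤ ∑ i ∈ Finset.range m, dist (g i) (g (i + 1)) := by
  -- Repeating `g 0` yields a chain of at least two points, also when `m = 0`.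
  set g' : ℕ → X := fun i => g (i - 1)
  have hg' : ∀ i < m + 1, g' i ≤ g' (i + 1) ∨ g' (i + 1) ≤ g' i := by
    rintro (_ | i) hi
    · exact Or.inl le_rfl
    · exact hg i (by omega)
  have hchain : IsChainBetween ((List.range (m + 1 + 1)).map g') (g 0) (g m) :=
    isChainBetween_map_range_iff.2 ⟨m.succ_pos, rfl, rfl, hg'⟩
  calc chainDist (g 0) (g m) ≤ chainLength ((List.range (m + 1 + 1)).map g') :=
        csInf_le (bddBelow_chainLengths _ _) ⟨_, hchain, rfl⟩
    _ = _ := by rw [chainLength_map_range, Finset.sum_range_succ']; simp [g']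

lemma chainDist_le_dist {x y : X} (h : x ≤ y ∨ y ≤ x) : chainDist x y ≤ dist x y := by
  simpa using chainDist_le_sum (g := fun i => if i = 0 then x else y) (m := 1) (by simpa using h)

lemma chainDist_le_sum_add_sum {g₁ g₂ : ℕ → X} {m₁ m₂ : ℕ}
    (hg₁ : ∀ i < m₁, g₁ i ≤ g₁ (i + 1) ∨ g₁ (i + 1) ≤ g₁ i)
    (hg₂ : ∀ i < m₂, g₂ i ≤ g₂ (i + 1) ∨ g₂ (i + 1) ≤ g₂ i) (h : g₁ m₁ = g₂ 0) :
    chainDist (g₁ 0) (g₂ m₂) ≤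
      ∑ i ∈ Finset.range m₁, dist (g₁ i) (g₁ (i + 1)) +
        ∑ i ∈ Finset.range m₂, dist (g₂ i) (g₂ (i + 1)) := by
  set g : ℕ → X := fun i => if i ≤ m₁ then g₁ i else g₂ (i - m₁)
  have hg_left : ∀ i ≤ m₁, g i = g₁ i := fun i hi => if_pos hi
  have hg_right : ∀ j, g (m₁ + j) = g₂ j := by
    rintro (_ | j)
    · simpa [g] using h
    · simp [g]
  have hg : ∀ i < m₁ + m₂, g i ≤ g (i + 1) ∨ g (i + 1) ≤ g i := by
    intro i hi
    rcases lt_or_ge i m₁ with hi₁ | hi₁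
    · rw [hg_left i hi₁.le, hg_left (i + 1) hi₁]
      exact hg₁ i hi₁
    · obtain ⟨j, rfl⟩ := Nat.exists_eq_add_of_le hi₁
      rw [add_assoc, hg_right, hg_right]
      exact hg₂ j (by omega)
  calc chainDist (g₁ 0) (g₂ m₂) = chainDist (g 0) (g (m₁ + m₂)) := by
        rw [hg_left 0 m₁.zero_le, hg_right]
    _ ≤ ∑ i ∈ Finset.range (m₁ + m₂), dist (g i) (g (i + 1)) := chainDist_le_sum hg
    _ = _ := by
      rw [Finset.sum_range_add]
      congr 1
      · refine Finset.sum_congr rfl fun i hi => ?_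
        rw [Finset.mem_range] at hi
        rw [hg_left i hi.le, hg_left (i + 1) hi]
      · simp only [add_assoc, hg_right]

variable (hb03 : ∀ x y : X, ∃ l : List X, IsChainBetween l x y)
include hb03

lemma exists_chain_sum_lt {x y : X} {r : ℝ} (h : chainDist x y < r) :
    ∃ (m : ℕ) (g : ℕ → X), 0 < m ∧ g 0 = x ∧ g m = y ∧
      (∀ i < m, g i ≤ g (i + 1) ∨ g (i + 1) ≤ g i) ∧
      ∑ i ∈ Finset.range m, dist (g i) (g (i + 1)) < r := by
  obtain ⟨l₀, hl₀⟩ := hb03 x y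
  obtain ⟨_, ⟨l, hl, rfl⟩, hlr⟩ := exists_lt_of_csInf_lt (s := {s : ℝ | ∃ l : List X,
    IsChainBetween l x y ∧ s = chainLength l}) ⟨_, l₀, hl₀, rfl⟩ h
  obtain ⟨m, g, hm, h0, hm', hg, hlen⟩ := hl.exists_fun
  exact ⟨m, g, hm, h0, hm', hg, hlen ▸ hlr⟩

lemma dist_le_chainDist (x y : X) : dist x y ≤ chainDist x y := by
  obtain ⟨l₀, hl₀⟩ := hb03 x y
  refine le_csInf ⟨_, l₀, hl₀, rfl⟩ ?_
  rintro _ ⟨l, hl, rfl⟩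
  obtain ⟨m, g, -, rfl, rfl, -, hlen⟩ := hl.exists_fun
  exact hlen ▸ dist_le_range_sum_dist g m

lemma chainDist_nonneg (x y : X) : 0 ≤ chainDist x y :=
  dist_nonneg.trans (dist_le_chainDist hb03 x y)

lemma chainDist_triangle (x y z : X) : chainDist x z ≤ chainDist x y + chainDist y z := by
  refine le_of_forall_pos_lt_add fun ε hε => ?_
  obtain ⟨m₁, g₁, -, rfl, rfl, hg₁, hs₁⟩ :=
    exists_chain_sum_lt hb03 (lt_add_of_pos_right (chainDist x y) (half_pos hε))
  obtain ⟨m₂, g₂, -, h₂, rfl, hg₂, hs₂⟩ :=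
    exists_chain_sum_lt hb03 (lt_add_of_pos_right (chainDist (g₁ m₁) z) (half_pos hε))
  calc chainDist (g₁ 0) (g₂ m₂) ≤ _ := chainDist_le_sum_add_sum hg₁ hg₂ h₂.symm
    _ < _ := by linarith

end ChainDist

section GluedIndex

/-- `gluedIndex m n = (k, i)` locates the `n`-th term of the concatenation of blocks
`0, 1, 2, …` of lengths `m 0, m 1, …`: it is term `i` of block `k`. -/
def gluedIndex (m : ℕ → ℕ) : ℕ → ℕ × ℕ
  | 0 => (0, 0)
  | n + 1 =>
    if (gluedIndex m n).2 + 1 < m (gluedIndex m n).1 then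
      ((gluedIndex m n).1, (gluedIndex m n).2 + 1)
    else ((gluedIndex m n).1 + 1, 0)

variable {m : ℕ → ℕ} (hm : ∀ k, 0 < m k)
include hm

lemma gluedIndex_snd_lt (n : ℕ) : (gluedIndex m n).2 < m (gluedIndex m n).1 := by
  induction n with
  | zero => exact hm 0
  | succ n ih =>
    simp only [gluedIndex]
    split_ifs with h
    exacts [h, hm _]

lemma sum_range_add_gluedIndex_snd (n : ℕ) :
    ∑ k ∈ Finset.range (gluedIndex m n).1, m k + (gluedIndex m n).2 = n := by
  induction n with
  | zero => simp [gluedIndex]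
  | succ n ih =>
    have := gluedIndex_snd_lt hm n
    simp only [gluedIndex]
    split_ifs with h <;> dsimp only
    · omega
    · rw [Finset.sum_range_succ]
      omega

lemma tendsto_gluedIndex_fst : Tendsto (fun n => (gluedIndex m n).1) atTop atTop := by
  refine tendsto_atTop_atTop.2 fun K => ⟨∑ k ∈ Finset.range K, m k, fun n hn => ?_⟩
  by_contra! hlt
  have hsum : ∑ k ∈ Finset.range ((gluedIndex m n).1 + 1), m k ≤ ∑ k ∈ Finset.range K, m k :=
    Finset.sum_le_sum_of_subset (Finset.range_subset_range.2 hlt)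
  rw [Finset.sum_range_succ] at hsum
  have := sum_range_add_gluedIndex_snd hm n
  have := gluedIndex_snd_lt hm n
  omega

lemma apply_gluedIndex_succ {α : Type*} {f : ℕ → ℕ → α} (hf : ∀ k, f k (m k) = f (k + 1) 0)
    (n : ℕ) :
    f (gluedIndex m (n + 1)).1 (gluedIndex m (n + 1)).2 =
      f (gluedIndex m n).1 ((gluedIndex m n).2 + 1) := by
  have := gluedIndex_snd_lt hm n
  simp only [gluedIndex]
  split_ifs with h
  · rfl
  · rw [show (gluedIndex m n).2 + 1 = m (gluedIndex m n).1 by omega, hf]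

end GluedIndex

section Completeness

variable {X : Type*} [MetricSpace X] [PartialOrder X]
  (hb03 : ∀ x y : X, ∃ l : List X, IsChainBetween l x y)
include hb03

lemma cauchySeq_of_chainDist {x : ℕ → X}
    (hx : ∀ ε : ℝ, 0 < ε → ∃ N : ℕ, ∀ m ≥ N, ∀ n ≥ N, chainDist (x m) (x n) < ε) :
    CauchySeq x :=
  Metric.cauchySeq_iff.2 fun ε hε => (hx ε hε).imp fun _ hN m hm n hn =>
    (dist_le_chainDist hb03 _ _).trans_lt (hN m hm n hn)

lemma tendsto_chainDist_succ {x : ℕ → X}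
    (hx : ∀ ε : ℝ, 0 < ε → ∃ N : ℕ, ∀ m ≥ N, ∀ n ≥ N, chainDist (x m) (x n) < ε) :
    Tendsto (fun n => chainDist (x n) (x (n + 1))) atTop (𝓝 0) := by
  refine Metric.tendsto_atTop.2 fun ε hε => (hx ε hε).imp fun N hN n hn => ?_
  rw [Real.dist_0_eq_abs, abs_of_nonneg (chainDist_nonneg hb03 _ _)]
  exact hN n hn (n + 1) (by omega)

lemma tendsto_chainDist_of_subseq {x : ℕ → X}
    (hx : ∀ ε : ℝ, 0 < ε → ∃ N : ℕ, ∀ m ≥ N, ∀ n ≥ N, chainDist (x m) (x n) < ε)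
    {L : X} {ψ : ℕ → ℕ} (hψ : Tendsto ψ atTop atTop)
    (h : Tendsto (fun n => chainDist (x (ψ n)) L) atTop (𝓝 0)) :
    Tendsto (fun n => chainDist (x n) L) atTop (𝓝 0) := by
  refine Metric.tendsto_atTop.2 fun ε hε => ?_
  obtain ⟨N, hN⟩ := hx (ε / 2) (half_pos hε)
  obtain ⟨k, hkN, hk⟩ :=
    ((hψ.eventually_ge_atTop N).and (h.eventually (gt_mem_nhds (half_pos hε)))).exists
  refine ⟨N, fun n hn => ?_⟩
  rw [Real.dist_0_eq_abs, abs_of_nonneg (chainDist_nonneg hb03 _ _)]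
  calc chainDist (x n) L ≤ chainDist (x n) (x (ψ k)) + chainDist (x (ψ k)) L :=
        chainDist_triangle hb03 _ _ _
    _ < ε / 2 + ε / 2 := add_lt_add (hN n hn _ hkN) hk
    _ = ε := add_halves ε

lemma exists_comparable_seq_chainDist_tendsto_zero {y : ℕ → X}
    (hy : Tendsto (fun k => chainDist (y k) (y (k + 1))) atTop (𝓝 0)) :
    ∃ (z : ℕ → X) (κ : ℕ → ℕ), (∀ n, z n ≤ z (n + 1) ∨ z (n + 1) ≤ z n) ∧
      Tendsto κ atTop atTop ∧ Tendsto (fun n => chainDist (y (κ n)) (z n)) atTop (𝓝 0) := by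
  choose m g hm hg0 hgm hg hsum using fun k : ℕ =>
    exists_chain_sum_lt hb03 (lt_add_of_pos_right (chainDist (y k) (y (k + 1)))
      (Nat.one_div_pos_of_nat (α := ℝ) (n := k)))
  have hglue : ∀ k, g k (m k) = g (k + 1) 0 := fun k => (hgm k).trans (hg0 (k + 1)).symm
  refine ⟨fun n => g (gluedIndex m n).1 (gluedIndex m n).2, fun n => (gluedIndex m n).1,
    fun n => ?_, tendsto_gluedIndex_fst hm, ?_⟩
  · dsimp only
    rw [apply_gluedIndex_succ hm hglue]
    exact hg _ _ (gluedIndex_snd_lt hm n)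
  have hbound : ∀ k, ∀ i ≤ m k,
      chainDist (y k) (g k i) ≤ chainDist (y k) (y (k + 1)) + 1 / ((k : ℝ) + 1) := by
    intro k i hi
    calc chainDist (y k) (g k i) = chainDist (g k 0) (g k i) := by rw [hg0]
      _ ≤ ∑ j ∈ Finset.range i, dist (g k j) (g k (j + 1)) :=
        chainDist_le_sum fun j hj => hg k j (by omega)
      _ ≤ ∑ j ∈ Finset.range (m k), dist (g k j) (g k (j + 1)) :=
        Finset.sum_le_sum_of_subset_of_nonneg (Finset.range_subset_range.2 hi)
          fun _ _ _ => dist_nonneg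
      _ ≤ _ := (hsum k).le
  have hδ : Tendsto (fun k : ℕ => chainDist (y k) (y (k + 1)) + 1 / ((k : ℝ) + 1))
      atTop (𝓝 0) := by
    simpa using hy.add tendsto_one_div_add_atTop_nhds_zero_nat
  exact squeeze_zero (fun _ => chainDist_nonneg hb03 _ _)
    (fun n => hbound _ _ (gluedIndex_snd_lt hm n).le) (hδ.comp (tendsto_gluedIndex_fst hm))

end Completeness

/-- If `d` is complete, (b03) holds and (a06) holds, then the chain metric `e`
is complete: every `e`-Cauchy sequence `e`-converges. -/
theorem chainDist_complete {X : Type*} [MetricSpace X] [PartialOrder X] [CompleteSpace X]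
    (hb03 : ∀ x y : X, ∃ l : List X, IsChainBetween l x y)
    (ha06 : ∀ (x : ℕ → X) (l : X),
      (∀ n, x n ≤ x (n + 1) ∨ x (n + 1) ≤ x n) →
      Tendsto x atTop (𝓝 l) →
      ∃ q : ℕ → ℕ, StrictMono q ∧ ∀ n, x (q n) ≤ l ∨ l ≤ x (q n)) :
    ∀ x : ℕ → X,
      (∀ ε : ℝ, 0 < ε → ∃ N : ℕ, ∀ m ≥ N, ∀ n ≥ N, chainDist (x m) (x n) < ε) →
      ∃ l : X, Tendsto (fun n => chainDist (x n) l) atTop (𝓝 0) := by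
  intro x hx
  obtain ⟨L, hL⟩ := cauchySeq_tendsto_of_complete (cauchySeq_of_chainDist hb03 hx)
  obtain ⟨z, κ, hz, hκ, hxz⟩ :=
    exists_comparable_seq_chainDist_tendsto_zero hb03 (tendsto_chainDist_succ hb03 hx)
  have hzL : Tendsto z atTop (𝓝 L) :=
    (hL.comp hκ).congr_dist <| squeeze_zero (fun _ => dist_nonneg)
      (fun _ => dist_le_chainDist hb03 _ _) hxz
  obtain ⟨q, hq, hqL⟩ := ha06 z L hz hzL
  refine ⟨L, tendsto_chainDist_of_subseq hb03 hx (hκ.comp hq.tendsto_atTop) ?_⟩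
  have hbound : ∀ n, chainDist (x (κ (q n))) L ≤
      chainDist (x (κ (q n))) (z (q n)) + dist (z (q n)) L := fun n =>
    (chainDist_triangle hb03 _ _ _).trans (add_le_add_right (chainDist_le_dist (hqL n)) _)
  refine squeeze_zero (fun _ => chainDist_nonneg hb03 _ _) hbound ?_
  simpa using (hxz.comp hq.tendsto_atTop).add
    ((tendsto_iff_dist_tendsto_zero.1 hzL).comp hq.tendsto_atTop)
end

section
/- Let (X,d) be a metric space with a quasi-order (reflexive transitive relation) ≤, and T : X → X an increasing selfmap (x ≤ y implies Tx ≤ Ty). Assume T is weakly conditional (G,<>)-contractive: there exists α ∈ (0,1) such that for all x,y with x <> y, if (1/(1+α))·max{d(x,Tx), d(y,Tx)} ≤ d(x,y) then d(Tx,Ty) ≤ α·d(x,y). Assume d is ao-complete and ≤ is ao-self-closed. Then T is a Picard operator modulo ≤: (i) for each x with x ≤ Tx, the orbit (T^n x) d-converges to some z ∈ Fix(T) with T^n x ≤ z for all n; and (ii) Fix(T) is ≤-singleton, i.e. z,w ∈ Fix(T) and z ≤ w imply z = w. -/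
/-!
Along an ascending orbit `zₙ = Tⁿ x` the contractive condition always applies to consecutive
points, so the steps `aₙ = d(zₙ, zₙ₊₁)` decay geometrically and the orbit converges to some `l`
with `zₙ ≤ l`. To get `Tl = l` we need the condition at `(zₙ, l)` for infinitely many `n`, i.e.
`max(aₙ, bₙ₊₁) ≤ (1 + α) bₙ` with `bₙ = d(zₙ, l)`. If it failed at `n`, then `α bₙ < bₙ₊₁`,
which with `aₙ₊₁ ≤ α aₙ ≤ α (bₙ + bₙ₊₁)` forces `aₙ₊₁ < (1 + α) bₙ₊₁`; so failure at `n` and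
`n + 1` leaves only `(1 + α) bₙ₊₁ < bₙ₊₂`, and failure from some point on makes `b` increase to a
positive value, contradicting `bₙ → 0`. Then `d(l, Tl) ≤ bₙ₊₁ + α bₙ` infinitely often.
-/

open Filter Topology Function

theorem frequently_max_le_one_add_mul {α : ℝ} (hα : 0 ≤ α) {a b : ℕ → ℝ}
    (hb_nonneg : ∀ n, 0 ≤ b n) (ha : ∀ n, a (n + 1) ≤ α * a n)
    (hab : ∀ n, a n ≤ b n + b (n + 1)) (hb : Tendsto b atTop (𝓝 0)) :
    ∃ᶠ n in atTop, max (a n) (b (n + 1)) ≤ (1 + α) * b n := by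
  have hgrow : ∀ n, (1 + α) * b n < max (a n) (b (n + 1)) →
      (1 + α) * b (n + 1) < max (a (n + 1)) (b (n + 2)) → (1 + α) * b (n + 1) < b (n + 2) := by
    intro n hn hn1
    have hαb : α * b n < b (n + 1) := by
      linarith [max_le (hab n) (le_add_of_nonneg_left (hb_nonneg n))]
    have ha1 : a (n + 1) < (1 + α) * b (n + 1) :=
      calc a (n + 1) ≤ α * a n := ha n
        _ ≤ α * (b n + b (n + 1)) := mul_le_mul_of_nonneg_left (hab n) hα
        _ < (1 + α) * b (n + 1) := by linarith
    exact (lt_max_iff.1 hn1).resolve_left ha1.le.not_gt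
  intro hfail
  obtain ⟨N, hN⟩ := eventually_atTop.1 hfail
  simp only [not_le] at hN
  have hstep : ∀ n, N ≤ n → (1 + α) * b (n + 1) < b (n + 2) := fun n hn =>
    hgrow n (hN n hn) (hN (n + 1) (by omega))
  have hpos : 0 < b (N + 2) := by nlinarith [hstep N le_rfl, hb_nonneg (N + 1)]
  have hmono : ∀ m, N + 2 ≤ m → b (N + 2) ≤ b m := by
    intro m hm
    induction m, hm using Nat.le_induction with
    | base => exact le_rfl
    | succ m hm ih =>
      obtain ⟨n, rfl⟩ : ∃ n, m = n + 1 := ⟨m - 1, by omega⟩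
      nlinarith [hstep n (by omega), hb_nonneg (n + 1)]
  have := ge_of_tendsto hb (eventually_atTop.2 ⟨N + 2, hmono⟩)
  linarith

theorem rel_iterate_of_le {X : Type*} {le : X → X → Prop} {T : X → X}
    (hrefl : ∀ x, le x x) (htrans : ∀ x y z, le x y → le y z → le x z)
    (hincr : ∀ x y, le x y → le (T x) (T y)) {x : X} (hx : le x (T x)) {i j : ℕ} (hij : i ≤ j) :
    le (T^[i] x) (T^[j] x) := by
  have hsucc : ∀ n, le (T^[n] x) (T^[n + 1] x) := by
    intro n
    induction n with
    | zero => exact hx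
    | succ n ih => simpa only [iterate_succ_apply'] using hincr _ _ ih
  induction j, hij using Nat.le_induction with
  | base => exact hrefl _
  | succ j _ ih => exact htrans _ _ _ ih (hsucc j)

def WeaklyCondContractive {X : Type*} [MetricSpace X] (le : X → X → Prop) (T : X → X) (α : ℝ) :
    Prop :=
  ∀ x y : X, (le x y ∨ le y x) →
    (1 / (1 + α)) * max (dist x (T x)) (dist y (T x)) ≤ dist x y →
    dist (T x) (T y) ≤ α * dist x y

section Orbit

variable {X : Type*} [MetricSpace X] {le : X → X → Prop} {T : X → X} {α : ℝ}

theorem WeaklyCondContractive.dist_map_map_le (hT : WeaklyCondContractive le T α) (hα : 0 ≤ α)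
    {x : X} (hx : le x (T x)) : dist (T x) (T (T x)) ≤ α * dist x (T x) := by
  refine hT x (T x) (Or.inl hx) ?_
  rw [dist_self, max_eq_left dist_nonneg, one_div_mul_eq_div]
  exact div_le_self dist_nonneg (by linarith)

theorem WeaklyCondContractive.dist_iterate_succ_le (hT : WeaklyCondContractive le T α)
    (hα : 0 ≤ α) {x : X} (hasc : ∀ n, le (T^[n] x) (T^[n + 1] x)) (n : ℕ) :
    dist (T^[n + 1] x) (T^[n + 2] x) ≤ α * dist (T^[n] x) (T^[n + 1] x) := by
  have hn := hasc n
  simp only [iterate_succ_apply'] at hn ⊢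
  exact hT.dist_map_map_le hα hn

theorem WeaklyCondContractive.cauchySeq_iterate (hT : WeaklyCondContractive le T α) (hα0 : 0 ≤ α)
    (hα1 : α < 1) {x : X} (hasc : ∀ n, le (T^[n] x) (T^[n + 1] x)) :
    CauchySeq fun n => T^[n] x := by
  refine cauchySeq_of_le_geometric α (dist x (T x)) hα1 fun n => ?_
  induction n with
  | zero => simp
  | succ n ih =>
    calc dist (T^[n + 1] x) (T^[n + 1 + 1] x) ≤ α * dist (T^[n] x) (T^[n + 1] x) :=
          hT.dist_iterate_succ_le hα0 hasc n
      _ ≤ α * (dist x (T x) * α ^ n) := mul_le_mul_of_nonneg_left ih hα0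
      _ = dist x (T x) * α ^ (n + 1) := by ring

theorem WeaklyCondContractive.isFixedPt_of_tendsto (hT : WeaklyCondContractive le T α)
    (hα : 0 ≤ α) {x l : X} (hasc : ∀ n, le (T^[n] x) (T^[n + 1] x))
    (hl : Tendsto (fun n => T^[n] x) atTop (𝓝 l)) (hle : ∀ n, le (T^[n] x) l) :
    IsFixedPt T l := by
  set a : ℕ → ℝ := fun n => dist (T^[n] x) (T^[n + 1] x)
  set b : ℕ → ℝ := fun n => dist (T^[n] x) l
  have hb : Tendsto b atTop (𝓝 0) := (tendsto_iff_dist_tendsto_zero).1 hl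
  have hpremise : ∃ᶠ n in atTop, max (a n) (b (n + 1)) ≤ (1 + α) * b n :=
    frequently_max_le_one_add_mul hα (fun n => dist_nonneg)
      (hT.dist_iterate_succ_le hα hasc) (fun n => dist_triangle_right _ _ l) hb
  have hclose : ∃ᶠ n in atTop, dist l (T l) ≤ b (n + 1) + α * b n := by
    refine hpremise.mono fun n hn => ?_
    have hcontr : dist (T^[n + 1] x) (T l) ≤ α * b n := by
      rw [iterate_succ_apply']
      refine hT _ l (Or.inl (hle n)) ?_
      rw [← iterate_succ_apply' T n, dist_comm l, one_div_mul_eq_div,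
        div_le_iff₀ (by linarith)]
      linarith
    linarith [dist_triangle_left l (T l) (T^[n + 1] x)]
  have hlim : Tendsto (fun n => b (n + 1) + α * b n) atTop (𝓝 0) := by
    simpa using (hb.comp (tendsto_add_atTop_nat 1)).add (hb.const_mul α)
  exact (dist_le_zero.1 (ge_of_tendsto_of_frequently hlim hclose)).symm

theorem WeaklyCondContractive.eq_of_isFixedPt (hT : WeaklyCondContractive le T α) (hα0 : 0 ≤ α)
    (hα1 : α < 1) {z w : X} (hz : IsFixedPt T z) (hw : IsFixedPt T w) (hzw : le z w) :
    z = w := by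
  have h := hT z w (Or.inl hzw) (by
    rw [hz.eq, dist_self, dist_comm, max_eq_right dist_nonneg, one_div_mul_eq_div]
    exact div_le_self dist_nonneg (by linarith))
  rw [hz.eq, hw.eq] at h
  exact dist_le_zero.1 (by nlinarith [dist_nonneg (x := z) (y := w)])

end Orbit

/-- Theorem 5: a weakly conditional `(G,<>)`-contractive increasing selfmap of
an ao-complete quasi-ordered metric space with ao-self-closed quasi-order is
a Picard operator modulo the quasi-order. -/
theorem suzuki_type_ordered {X : Type*} [MetricSpace X]
    (le : X → X → Prop) (hrefl : ∀ x : X, le x x)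
    (htrans : ∀ x y z : X, le x y → le y z → le x z)
    (T : X → X) (hincr : ∀ x y : X, le x y → le (T x) (T y))
    (α : ℝ) (hα0 : 0 < α) (hα1 : α < 1)
    (hcontr : ∀ x y : X, (le x y ∨ le y x) →
      (1 / (1 + α)) * max (dist x (T x)) (dist y (T x)) ≤ dist x y →
      dist (T x) (T y) ≤ α * dist x y)
    (haocomplete : ∀ z : ℕ → X, (∀ i j : ℕ, i ≤ j → le (z i) (z j)) →
      (∃ x : X, ∀ n, z n = T^[n] x) → CauchySeq z →
      ∃ l : X, Tendsto z atTop (𝓝 l))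
    (haoselfclosed : ∀ (z : ℕ → X) (l : X), (∀ i j : ℕ, i ≤ j → le (z i) (z j)) →
      (∃ x : X, ∀ n, z n = T^[n] x) → Tendsto z atTop (𝓝 l) →
      ∀ n, le (z n) l) :
    (∀ x : X, le x (T x) →
      ∃ z : X, Tendsto (fun n => T^[n] x) atTop (𝓝 z) ∧ T z = z ∧
        ∀ n, le (T^[n] x) z) ∧
    (∀ z w : X, T z = z → T w = w → le z w → z = w) := by
  have hT : WeaklyCondContractive le T α := hcontr
  refine ⟨fun x hx => ?_, fun z w hz hw hzw => hT.eq_of_isFixedPt hα0.le hα1 hz hw hzw⟩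
  have hasc : ∀ i j : ℕ, i ≤ j → le (T^[i] x) (T^[j] x) := fun i j hij =>
    rel_iterate_of_le hrefl htrans hincr hx hij
  have horbit : ∃ y, ∀ n, T^[n] x = T^[n] y := ⟨x, fun _ => rfl⟩
  have hsucc : ∀ n, le (T^[n] x) (T^[n + 1] x) := fun n => hasc n (n + 1) n.le_succ
  obtain ⟨l, hl⟩ := haocomplete _ hasc horbit (hT.cauchySeq_iterate hα0.le hα1 hsucc)
  have hle := haoselfclosed _ l hasc horbit hl
  exact ⟨l, hl, hT.isFixedPt_of_tendsto hα0.le hsucc hl hle, hle⟩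
end

section
/- Let (X,D,≤) be an ordered metrizable uniform space with ≤ interval-closed. Let Y be an order-closed subset of X, T : Y → Y an increasing map, and Y_oi = {x ∈ Y : x ≤ Tx} nonempty. Assume (d03): every increasing sequence (x_n) in Y such that x_n ∈ T^{k(n)}(Y_oi) for all n, for some strictly increasing sequence (k(n)) of natural numbers, is relatively compact. Then for every u ∈ Y_oi there exists v ∈ Y with v = Tv such that (a) u ≤ v, and (b) whenever w ∈ Y_oi satisfies v ≤ w, one has v = w. -/
/-!
Let `M` be the set of solutions of `x ≤ T x` above `u`. If `M` had no maximal element, the map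
`f` sending `x ∈ M` to a `D`-limit of a subsequence of the orbit of some strictly larger `y ∈ M`
would be strictly progressive on `M`; such limits exist by (d03), and since `≤` is
interval-closed a `D`-limit of an increasing sequence is its supremum. Iterate `f`
transfinitely, taking suprema at limit stages. Along any cofinal sequence `αₙ` of a countable
limit `λ`, a diagonal choice of iterates and (d03) again produce the supremum `s λ` as a
`D`-limit of the `s (αₙ + 1)`, so the iteration runs through all of `ω₁`. As `D` is countable
and sufficient, uncountably many of the steps `s (α + 1) < s (α + 2)` are separated by the same
`D i` by at least the same `1 / (k + 1)`; a cofinal sequence of such `α` in some countable limit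
`λ` contradicts `s (αₙ + 1), s (αₙ + 2) → s λ`. Finally a maximal `v ∈ M` is fixed by `T`,
because `T v ∈ M`.
-/

open Filter Topology

/-- `D`-convergence of a sequence in a metrizable uniform space given by the
countable family of pseudometrics `D`. -/
def DConv {X : Type*} (D : ℕ → X → X → ℝ) (x : ℕ → X) (l : X) : Prop :=
  ∀ i : ℕ, Tendsto (fun n => D i (x n) l) atTop (𝓝 0)

/-- A sequence is relatively compact if every subsequence contains a
`D`-convergent subsequence. -/
def RelCompactSeq {X : Type*} (D : ℕ → X → X → ℝ) (x : ℕ → X) : Prop :=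
  ∀ q : ℕ → ℕ, StrictMono q →
    ∃ p : ℕ → ℕ, StrictMono p ∧ ∃ l : X, DConv D (fun n => x (q (p n))) l

/-- A subset is order closed when the limit of any `D`-convergent increasing
sequence in it belongs to it. -/
def OrderClosed {X : Type*} [PartialOrder X] (D : ℕ → X → X → ℝ) (Y : Set X) : Prop :=
  ∀ (z : ℕ → X) (l : X), (∀ n, z n ∈ Y) → (∀ i j : ℕ, i ≤ j → z i ≤ z j) →
    DConv D z l → l ∈ Y

/-- The ordering is interval closed when all sets `[x,≤)` and `(≤,x]` are
order closed. -/
def IntervalClosed {X : Type*} [PartialOrder X] (D : ℕ → X → X → ℝ) : Prop :=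
  ∀ x : X, OrderClosed D {y | x ≤ y} ∧ OrderClosed D {y | y ≤ x}

open Set Order Ordinal Cardinal

universe u

structure IsPseudometricFamily {X : Type*} (D : ℕ → X → X → ℝ) : Prop where
  self_eq_zero : ∀ i x, D i x x = 0
  comm : ∀ i x y, D i x y = D i y x
  triangle : ∀ i x y z, D i x z ≤ D i x y + D i y z

namespace IsPseudometricFamily

variable {X : Type*} {D : ℕ → X → X → ℝ}

lemma nonneg (hD : IsPseudometricFamily D) (i : ℕ) (x y : X) : 0 ≤ D i x y := by
  have := hD.triangle i x y x
  rw [hD.self_eq_zero, hD.comm i y x] at this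
  linarith

lemma dConv_of_tendsto (hD : IsPseudometricFamily D) {a b : ℕ → X} {l : X}
    (hab : ∀ i, Tendsto (fun n => D i (a n) (b n)) atTop (𝓝 0)) (hb : DConv D b l) :
    DConv D a l := fun i =>
  squeeze_zero (fun n => hD.nonneg i _ _) (fun n => hD.triangle i (a n) (b n) l)
    (by simpa using (hab i).add (hb i))

lemma exists_strictMono_tendsto (hD : IsPseudometricFamily D) {y : ℕ → ℕ → X} {t : ℕ → X}
    (h : ∀ n, ∃ r : ℕ → ℕ, StrictMono r ∧ DConv D (fun m => y n (r m)) (t n)) :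
    ∃ q : ℕ → ℕ, StrictMono q ∧ ∀ i, Tendsto (fun n => D i (t n) (y n (q n))) atTop (𝓝 0) := by
  obtain ⟨q, hq, hclose⟩ : ∃ q : ℕ → ℕ, StrictMono q ∧
      ∀ n, ∀ i ∈ Iic n, D i (y n (q n)) (t n) < 1 / ((n : ℝ) + 1) := by
    refine extraction_forall_of_frequently
      (P := fun n k => ∀ i ∈ Iic n, D i (y n k) (t n) < 1 / ((n : ℝ) + 1)) fun n => ?_
    obtain ⟨r, hr, hconv⟩ := h n
    refine hr.tendsto_atTop.frequently (Eventually.frequently ?_)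
    exact (eventually_all_finite (finite_Iic n)).2 fun i _ =>
      (hconv i).eventually_lt_const (by positivity)
  refine ⟨q, hq, fun i => squeeze_zero' (.of_forall fun n => hD.nonneg i _ _) ?_
    tendsto_one_div_add_atTop_nhds_zero_nat⟩
  filter_upwards [eventually_ge_atTop i] with n hn
  rw [hD.comm]
  exact (hclose n i hn).le

end IsPseudometricFamily

lemma dConv_of_forall_subseq {X : Type*} {D : ℕ → X → X → ℝ} {x : ℕ → X} {l : X}
    (h : ∀ φ : ℕ → ℕ, StrictMono φ → ∃ ψ : ℕ → ℕ, StrictMono ψ ∧ DConv D (x ∘ φ ∘ ψ) l) :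
    DConv D x l := fun i =>
  tendsto_of_subseq_tendsto fun _ hns => by
    obtain ⟨φ, -, hφ⟩ := strictMono_subseq_of_tendsto_atTop hns
    obtain ⟨ψ, -, hψ⟩ := h _ hφ
    exact ⟨φ ∘ ψ, hψ i⟩

structure IsCofinalSeq (d : ℕ → Ordinal.{u}) (o : Ordinal.{u}) : Prop where
  strictMono : StrictMono d
  lt : ∀ n, d n < o
  exists_le : ∀ p < o, ∃ n, p ≤ d n

namespace IsCofinalSeq

variable {d : ℕ → Ordinal.{u}} {o : Ordinal.{u}}

lemma isSuccLimit (hd : IsCofinalSeq d o) : IsSuccLimit o := by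
  refine Ordinal.isSuccLimit_iff.2 ⟨(hd.lt 0).ne_bot, isSuccPrelimit_iff_succ_lt.2 fun p hp => ?_⟩
  obtain ⟨n, hn⟩ := hd.exists_le p hp
  exact (succ_le_of_lt (hn.trans_lt (hd.strictMono n.lt_succ_self))).trans_lt (hd.lt _)

lemma add_one (hd : IsCofinalSeq d o) : IsCofinalSeq (fun n => d n + 1) o where
  strictMono _ _ h := by simpa using hd.strictMono h
  lt n := by simpa using hd.isSuccLimit.succ_lt (hd.lt n)
  exists_le p hp := (hd.exists_le p hp).imp fun _ h => h.trans le_self_add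

lemma comp (hd : IsCofinalSeq d o) {φ : ℕ → ℕ} (hφ : StrictMono φ) : IsCofinalSeq (d ∘ φ) o where
  strictMono := hd.strictMono.comp hφ
  lt n := hd.lt (φ n)
  exists_le p hp := (hd.exists_le p hp).imp fun n h => h.trans (hd.strictMono.monotone (hφ.id_le n))

lemma upperBounds_image_Iio {α : Type*} [Preorder α] {s : Ordinal.{u} → α}
    (hs : MonotoneOn s (Iio o)) (hd : IsCofinalSeq d o) :
    upperBounds (s '' Iio o) = upperBounds (range (s ∘ d)) := by
  refine (upperBounds_mono_set ?_).antisymm fun b hb => ?_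
  · exact range_subset_iff.2 fun n => mem_image_of_mem s (hd.lt n)
  · rintro _ ⟨p, hp, rfl⟩
    obtain ⟨n, hn⟩ := hd.exists_le p hp
    exact (hs hp (hd.lt n) hn).trans (hb (mem_range_self n))

end IsCofinalSeq

lemma exists_isCofinalSeq {o : Ordinal.{u}} (ho : IsSuccLimit o) (ho' : o < ω₁) :
    ∃ d, IsCofinalSeq d o := by
  have hcof : o.cof.ord = ω := by rw [cof_eq_aleph0_of_isSuccLimit ho ho', ord_aleph0]
  obtain ⟨f, hf⟩ := exists_isFundamentalSeq hcof
  refine ⟨fun n => f ⟨n, natCast_lt_omega0 n⟩,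
    ⟨fun m n h => hf.strictMono (Subtype.mk_lt_mk.2 (Nat.cast_lt.2 h)), fun n => (f _).2,
      fun p hp => ?_⟩⟩
  obtain ⟨_, ⟨⟨c, hc⟩, rfl⟩, hpc⟩ := hf.isCofinal_range ⟨p, hp⟩
  obtain ⟨n, rfl⟩ := lt_omega0.1 hc
  exact ⟨n, hpc⟩

lemma exists_isCofinalSeq_of_unbounded {S : Set Ordinal.{u}}
    (hS : ∀ b < ω₁, ∃ a ∈ S, b < a ∧ a < ω₁) :
    ∃ o < ω₁, ∃ d, IsCofinalSeq d o ∧ ∀ n, d n ∈ S := by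
  let A := {a // a ∈ S ∧ a < ω₁}
  have : Nonempty A :=
    let ⟨a, haS, _, ha⟩ := hS 0 (omega_pos 1)
    ⟨⟨a, haS, ha⟩⟩
  have : NoMaxOrder A := ⟨fun a =>
    let ⟨b, hbS, hab, hb⟩ := hS a.1 a.2.2
    ⟨⟨b, hbS, hb⟩, hab⟩⟩
  obtain ⟨f, hf⟩ := Nat.exists_strictMono A
  refine ⟨⨆ n, (f n).1, iSup_lt_omega_one fun n => (f n).2.2, fun n => (f n).1,
    ⟨fun m n h => hf h, fun n => (show (f n).1 < (f (n + 1)).1 from hf n.lt_succ_self).trans_le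
        (Ordinal.le_iSup _ _),
      fun p hp => ?_⟩, fun n => (f n).2.1⟩
  exact (Ordinal.lt_iSup_iff.1 hp).imp fun _ h => h.le

lemma exists_unbounded_of_countable_cover {ι : Type*} [Countable ι]
    {P : ι → Ordinal.{u} → Prop} (h : ∀ a < ω₁, ∃ i, P i a) :
    ∃ i, ∀ b < ω₁, ∃ a, P i a ∧ b < a ∧ a < ω₁ := by
  by_contra! H
  choose B hB hBP using H
  have hsup : (⨆ i, B i) + 1 < ω₁ := (isSuccLimit_omega 1).succ_lt (iSup_lt_omega_one hB)
  obtain ⟨i, hi⟩ := h _ hsup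
  exact (hBP i _ hi (Order.lt_add_one_iff.2 (Ordinal.le_iSup B i))).not_gt hsup

theorem IsPseudometricFamily.exists_add_one_eq {X : Type*} {D : ℕ → X → X → ℝ}
    (hD : IsPseudometricFamily D) (hDsuff : ∀ x y : X, (∀ i, D i x y = 0) → x = y)
    (s : Ordinal.{u} → X)
    (hs : ∀ o < ω₁, ∀ d, IsCofinalSeq d o → DConv D (fun n => s (d n + 1)) (s o)) :
    ∃ a < ω₁, s (a + 1) = s (a + 1 + 1) := by
  by_contra! hne
  have hsep : ∀ a < ω₁, ∃ ik : ℕ × ℕ,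
      1 / ((ik.2 : ℝ) + 1) < D ik.1 (s (a + 1)) (s (a + 1 + 1)) := by
    intro a ha
    obtain ⟨i, hi⟩ := not_forall.1 (mt (hDsuff _ _) (hne a ha))
    obtain ⟨k, hk⟩ := exists_nat_one_div_lt ((hD.nonneg i _ _).lt_of_ne' hi)
    exact ⟨(i, k), hk⟩
  obtain ⟨⟨i, k⟩, hik⟩ := exists_unbounded_of_countable_cover hsep
  obtain ⟨o, ho, d, hd, hdS⟩ := exists_isCofinalSeq_of_unbounded (S := {a | _}) hik
  have hclose := ((hs o ho d hd i).add (hs o ho _ hd.add_one i)).eventually_lt_const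
    (show (0 : ℝ) + 0 < 1 / ((k : ℝ) + 1) by rw [add_zero]; positivity)
  obtain ⟨n, hn⟩ := hclose.exists
  have hsep_n : 1 / ((k : ℝ) + 1) < D i (s (d n + 1)) (s (d n + 1 + 1)) := hdS n
  have := hD.triangle i (s (d n + 1)) (s o) (s (d n + 1 + 1))
  rw [hD.comm i (s o)] at this
  linarith

section TransfiniteIter

variable {X : Type*} (x₀ : X) (f : X → X) (lub : Set X → X)

noncomputable def transfiniteIter (o : Ordinal.{u}) : X :=
  limitRecOn o x₀ (fun _ x => f x) fun o _ s => lub (range fun p : Iio o => s p p.2)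

lemma transfiniteIter_zero : transfiniteIter.{u} x₀ f lub 0 = x₀ :=
  limitRecOn_zero ..

lemma transfiniteIter_add_one (o : Ordinal.{u}) :
    transfiniteIter x₀ f lub (o + 1) = f (transfiniteIter x₀ f lub o) :=
  limitRecOn_add_one ..

lemma transfiniteIter_limit {o : Ordinal.{u}} (ho : IsSuccLimit o) :
    transfiniteIter x₀ f lub o = lub (transfiniteIter x₀ f lub '' Iio o) := by
  rw [transfiniteIter, limitRecOn_limit _ _ _ _ ho, image_eq_range]
  rfl

end TransfiniteIter

section ProgressiveMap

variable {X : Type*} [PartialOrder X] {D : ℕ → X → X → ℝ} {M : Set X} {f : X → X}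

def HasSeqLimits (D : ℕ → X → X → ℝ) (M : Set X) (f : X → X) : Prop :=
  ∀ a : ℕ → X, (∀ n, a n ∈ M) → (∀ n, f (a n) ≤ a (n + 1)) →
    ∃ L ∈ M, IsLUB (range (f ∘ a)) L ∧ ∃ r : ℕ → ℕ, StrictMono r ∧ DConv D (f ∘ a ∘ r) L

lemma HasSeqLimits.exists_isLUB_image_Iio (hlim : HasSeqLimits D M f) {s : Ordinal.{u} → X}
    {o : Ordinal.{u}} (hsM : ∀ p < o, s p ∈ M) (hs : MonotoneOn s (Iio o))
    (hsf : ∀ p, s (p + 1) = f (s p)) {d : ℕ → Ordinal.{u}} (hd : IsCofinalSeq d o) :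
    ∃ L ∈ M, IsLUB (s '' Iio o) L ∧
      ∃ r : ℕ → ℕ, StrictMono r ∧ DConv D (fun n => s (d (r n) + 1)) L := by
  obtain ⟨L, hLM, hL, r, hr, hLr⟩ := hlim (s ∘ d) (fun n => hsM _ (hd.lt n)) fun n => by
    show f (s (d n)) ≤ s (d (n + 1))
    rw [← hsf]
    exact hs (hd.add_one.lt n) (hd.lt _) (add_one_le_of_lt (hd.strictMono n.lt_succ_self))
  refine ⟨L, hLM, ?_, r, hr, by simpa only [Function.comp_def, hsf] using hLr⟩
  rw [IsLUB, hd.add_one.upperBounds_image_Iio hs]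
  simp only [Function.comp_def, hsf]
  exact hL

lemma monotoneOn_Iio_of_forall_lt {α β : Type*} [PartialOrder α] [Preorder β] {s : α → β} {o : α}
    (h : ∀ q < o, ∀ p < q, s p ≤ s q) : MonotoneOn s (Iio o) := fun p _ q hq hpq =>
  hpq.eq_or_lt.elim (fun hpq => hpq ▸ le_rfl) (h q hq p)

namespace HasSeqLimits

variable {lub : Set X → X} {x₀ : X}

lemma transfiniteIter_mem_and_le (hlim : HasSeqLimits D M f) (hfM : MapsTo f M M)
    (hf : ∀ x ∈ M, x ≤ f x) (hlub : ∀ S, (∃ L ∈ M, IsLUB S L) → lub S ∈ M ∧ IsLUB S (lub S))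
    (hx₀ : x₀ ∈ M) {o : Ordinal.{u}} (ho : o < ω₁) :
    transfiniteIter x₀ f lub o ∈ M ∧
      ∀ p < o, transfiniteIter x₀ f lub p ≤ transfiniteIter x₀ f lub o := by
  have hsf := transfiniteIter_add_one x₀ f lub
  induction o using WellFoundedLT.induction with
  | _ o IH => ?_
  have hmono : MonotoneOn (transfiniteIter x₀ f lub) (Iio o) :=
    monotoneOn_Iio_of_forall_lt fun q hq => (IH q hq (hq.trans ho)).2
  rcases zero_or_succ_or_isSuccLimit o with rfl | ⟨p, rfl⟩ | ho'
  · exact ⟨(transfiniteIter_zero x₀ f lub).symm ▸ hx₀, fun p hp => (not_lt_zero hp).elim⟩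
  · have hpM := (IH p (lt_succ p) ((lt_succ p).trans ho)).1
    rw [succ_eq_add_one] at hmono ⊢
    refine ⟨hsf p ▸ hfM hpM, fun q hq => ?_⟩
    rw [hsf]
    exact (hmono hq (lt_add_one p) (lt_add_one_iff.1 hq)).trans (hf _ hpM)
  · obtain ⟨d, hd⟩ := exists_isCofinalSeq ho' ho
    obtain ⟨L, hLM, hL, -⟩ := hlim.exists_isLUB_image_Iio
      (fun p hp => (IH p hp (hp.trans ho)).1) hmono hsf hd
    have hso := (transfiniteIter_limit x₀ f lub ho').symm ▸ hlub _ ⟨L, hLM, hL⟩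
    exact ⟨hso.1, fun p hp => hso.2.1 (mem_image_of_mem _ hp)⟩

lemma dConv_transfiniteIter (hlim : HasSeqLimits D M f) (hfM : MapsTo f M M)
    (hf : ∀ x ∈ M, x ≤ f x) (hlub : ∀ S, (∃ L ∈ M, IsLUB S L) → lub S ∈ M ∧ IsLUB S (lub S))
    (hx₀ : x₀ ∈ M) {o : Ordinal.{u}} (ho : o < ω₁) {d : ℕ → Ordinal.{u}} (hd : IsCofinalSeq d o) :
    DConv D (fun n => transfiniteIter x₀ f lub (d n + 1)) (transfiniteIter x₀ f lub o) := by
  have hmono : MonotoneOn (transfiniteIter x₀ f lub) (Iio o) :=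
    monotoneOn_Iio_of_forall_lt fun q hq =>
      (hlim.transfiniteIter_mem_and_le hfM hf hlub hx₀ (hq.trans ho)).2
  refine dConv_of_forall_subseq fun φ hφ => ?_
  obtain ⟨L, hLM, hL, r, hr, hLr⟩ := hlim.exists_isLUB_image_Iio
    (fun p hp => (hlim.transfiniteIter_mem_and_le hfM hf hlub hx₀ (hp.trans ho)).1) hmono
    (transfiniteIter_add_one x₀ f lub) (hd.comp hφ)
  have hso := (transfiniteIter_limit x₀ f lub hd.isSuccLimit).symm ▸ hlub _ ⟨L, hLM, hL⟩
  rw [hso.2.unique hL]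
  exact ⟨r, hr, hLr⟩

theorem exists_apply_eq (hD : IsPseudometricFamily D)
    (hDsuff : ∀ x y : X, (∀ i, D i x y = 0) → x = y) (hlim : HasSeqLimits D M f)
    (hfM : MapsTo f M M) (hf : ∀ x ∈ M, x ≤ f x) (hx₀ : x₀ ∈ M) :
    ∃ x ∈ M, f x = x := by
  have : ∀ S : Set X, ∃ L, (∃ L' ∈ M, IsLUB S L') → L ∈ M ∧ IsLUB S L := fun S =>
    (em (∃ L ∈ M, IsLUB S L)).elim (fun ⟨L, hL⟩ => ⟨L, fun _ => hL⟩)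
      fun h => ⟨x₀, fun h' => absurd h' h⟩
  choose lub hlub using this
  obtain ⟨a, ha, h⟩ := hD.exists_add_one_eq hDsuff (transfiniteIter.{0} x₀ f lub)
    fun o ho _ hd => hlim.dConv_transfiniteIter hfM hf hlub hx₀ ho hd
  have ha1 : a + 1 < ω₁ := by simpa using (isSuccLimit_omega 1).succ_lt ha
  refine ⟨_, (hlim.transfiniteIter_mem_and_le hfM hf hlub hx₀ ha1).1, ?_⟩
  exact (transfiniteIter_add_one x₀ f lub _).symm.trans h.symm

end HasSeqLimits

end ProgressiveMap

section Comparison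

open Function

variable {X : Type*}

/-- The paper's `Y_oi`. -/
def postfixedPoints [LE X] (Y : Set X) (T : X → X) : Set X := {x ∈ Y | x ≤ T x}

def IsOrbitLimit (D : ℕ → X → X → ℝ) (T : X → X) (x l : X) : Prop :=
  ∃ r : ℕ → ℕ, StrictMono r ∧ DConv D (fun m => T^[r m] x) l

section Iterate

variable [Preorder X] {Y : Set X} {T : X → X}

lemma iterate_mem_postfixedPoints (hTY : MapsTo T Y Y) (hT : MonotoneOn T Y) {x : X}
    (hx : x ∈ postfixedPoints Y T) (m : ℕ) : T^[m] x ∈ postfixedPoints Y T := by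
  induction m with
  | zero => exact hx
  | succ m ih =>
    rw [iterate_succ_apply']
    exact ⟨hTY ih.1, hT ih.1 (hTY ih.1) ih.2⟩

lemma monotone_iterate_of_mem_postfixedPoints (hTY : MapsTo T Y Y) (hT : MonotoneOn T Y)
    {x : X} (hx : x ∈ postfixedPoints Y T) : Monotone fun m => T^[m] x :=
  monotone_nat_of_le_succ fun m => by
    rw [iterate_succ_apply']
    exact (iterate_mem_postfixedPoints hTY hT hx m).2

lemma iterate_le_iterate_of_le (hTY : MapsTo T Y Y) (hT : MonotoneOn T Y) {x y : X}
    (hx : x ∈ Y) (hy : y ∈ Y) (hxy : x ≤ y) (m : ℕ) : T^[m] x ≤ T^[m] y := by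
  induction m with
  | zero => exact hxy
  | succ m ih =>
    rw [iterate_succ_apply', iterate_succ_apply']
    exact hT (hTY.iterate m hx) (hTY.iterate m hy) ih

end Iterate

variable [PartialOrder X] {D : ℕ → X → X → ℝ} {Y : Set X} {T : X → X}

/-- Condition (d03). -/
def RelCompactIncreasingIterates (D : ℕ → X → X → ℝ) (Y : Set X) (T : X → X) : Prop :=
  ∀ (x : ℕ → X) (k : ℕ → ℕ), StrictMono k → (∀ n, x n ∈ Y) → Monotone x →
    (∀ n, x n ∈ T^[k n] '' postfixedPoints Y T) → RelCompactSeq D x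

lemma isLUB_of_dConv (hic : IntervalClosed D) {z : ℕ → X} {l : X} (hz : Monotone z)
    (hl : DConv D z l) : IsLUB (range z) l := by
  refine ⟨forall_mem_range.2 fun n => ?_, fun b hb => ?_⟩
  · exact (hic (z n)).1 (fun m => z (m + n)) l (fun m => hz le_add_self)
      (fun i j h => hz (Nat.add_le_add_right h n)) fun i => (hl i).comp (tendsto_add_atTop_nat n)
  · exact (hic b).2 z l (fun n => hb (mem_range_self n)) (fun i j h => hz h) hl

lemma mem_postfixedPoints_of_dConv (hic : IntervalClosed D) (hY : OrderClosed D Y)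
    (hT : MonotoneOn T Y) {z : ℕ → X} {l : X} (hzP : ∀ n, z n ∈ postfixedPoints Y T)
    (hz : Monotone z) (hl : DConv D z l) : l ∈ postfixedPoints Y T := by
  have hlY : l ∈ Y := hY z l (fun n => (hzP n).1) (fun i j h => hz h) hl
  have hLUB := isLUB_of_dConv hic hz hl
  refine ⟨hlY, hLUB.2 (forall_mem_range.2 fun n => ?_)⟩
  exact (hzP n).2.trans (hT (hzP n).1 hlY (hLUB.1 (mem_range_self n)))

lemma exists_isOrbitLimit (hTY : MapsTo T Y Y) (hT : MonotoneOn T Y)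
    (hd03 : RelCompactIncreasingIterates D Y T) {x : X} (hx : x ∈ postfixedPoints Y T) :
    ∃ l, IsOrbitLimit D T x l := by
  obtain ⟨r, hr, l, hl⟩ := hd03 (fun n => T^[n] x) id strictMono_id
    (fun n => (iterate_mem_postfixedPoints hTY hT hx n).1)
    (monotone_iterate_of_mem_postfixedPoints hTY hT hx) (fun n => ⟨x, hx, rfl⟩) id strictMono_id
  exact ⟨l, r, hr, hl⟩

namespace IsOrbitLimit

variable {x l : X}

lemma iterate_le (hic : IntervalClosed D) (hTY : MapsTo T Y Y) (hT : MonotoneOn T Y)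
    (hx : x ∈ postfixedPoints Y T) (hl : IsOrbitLimit D T x l) (m : ℕ) : T^[m] x ≤ l := by
  obtain ⟨r, hr, hrl⟩ := hl
  have horbit := monotone_iterate_of_mem_postfixedPoints hTY hT hx
  exact (horbit (hr.id_le m)).trans
    ((isLUB_of_dConv hic (horbit.comp hr.monotone) hrl).1 (mem_range_self m))

lemma mem (hic : IntervalClosed D) (hY : OrderClosed D Y) (hTY : MapsTo T Y Y)
    (hT : MonotoneOn T Y) (hx : x ∈ postfixedPoints Y T) (hl : IsOrbitLimit D T x l) :
    l ∈ postfixedPoints Y T := by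
  obtain ⟨r, hr, hrl⟩ := hl
  exact mem_postfixedPoints_of_dConv hic hY hT
    (fun m => iterate_mem_postfixedPoints hTY hT hx (r m))
    ((monotone_iterate_of_mem_postfixedPoints hTY hT hx).comp hr.monotone) hrl

end IsOrbitLimit

/-- The diagonal step: `T^[q n] (w n)` is chosen close to `t n` in the first `n + 1`
pseudometrics, and (d03) applies to these iterates. -/
lemma exists_isLUB_of_isOrbitLimit (hD : IsPseudometricFamily D) (hic : IntervalClosed D)
    (hY : OrderClosed D Y) (hTY : MapsTo T Y Y) (hT : MonotoneOn T Y)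
    (hd03 : RelCompactIncreasingIterates D Y T) {w t : ℕ → X}
    (hw : ∀ n, w n ∈ postfixedPoints Y T) (ht : ∀ n, IsOrbitLimit D T (w n) (t n))
    (htw : ∀ n, t n ≤ w (n + 1)) :
    ∃ L ∈ postfixedPoints Y T, IsLUB (range t) L ∧
      ∃ r : ℕ → ℕ, StrictMono r ∧ DConv D (t ∘ r) L := by
  obtain ⟨q, hq, hqt⟩ := hD.exists_strictMono_tendsto (y := fun n m => T^[m] (w n)) ht
  set z := fun n => T^[q n] (w n)
  have hzP n : z n ∈ postfixedPoints Y T := iterate_mem_postfixedPoints hTY hT (hw n) _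
  have hzt n : z n ≤ t n := (ht n).iterate_le hic hTY hT (hw n) _
  have hwz n : w n ≤ z n := monotone_iterate_of_mem_postfixedPoints hTY hT (hw n) (Nat.zero_le _)
  have hz : Monotone z := monotone_nat_of_le_succ fun n =>
    calc z n ≤ T^[q (n + 1)] (z n) :=
          monotone_iterate_of_mem_postfixedPoints hTY hT (hzP n) (Nat.zero_le _)
      _ ≤ z (n + 1) := iterate_le_iterate_of_le hTY hT (hzP n).1 (hw _).1
          ((hzt n).trans (htw n)) _
  obtain ⟨p, hp, L, hL⟩ := hd03 z q hq (fun n => (hzP n).1) hz (fun n => ⟨w n, hw n, rfl⟩)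
    id strictMono_id
  have hzp : Monotone (z ∘ p) := hz.comp hp.monotone
  have hLUB := isLUB_of_dConv hic hzp hL
  refine ⟨L, mem_postfixedPoints_of_dConv hic hY hT (fun n => hzP _) hzp hL, ⟨?_, ?_⟩, p, hp,
    hD.dConv_of_tendsto (fun i => (hqt i).comp hp.tendsto_atTop) hL⟩
  · refine forall_mem_range.2 fun n => (htw n).trans ((hwz _).trans ?_)
    exact (hz (hp.id_le _)).trans (hLUB.1 (mem_range_self (n + 1)))
  · exact fun b hb => hLUB.2 (forall_mem_range.2 fun n => (hzt _).trans (hb (mem_range_self _)))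

theorem exists_maximal_postfixedPoint (hD : IsPseudometricFamily D)
    (hDsuff : ∀ x y : X, (∀ i, D i x y = 0) → x = y) (hic : IntervalClosed D)
    (hY : OrderClosed D Y) (hTY : MapsTo T Y Y) (hT : MonotoneOn T Y)
    (hd03 : RelCompactIncreasingIterates D Y T) {u : X} (hu : u ∈ postfixedPoints Y T) :
    ∃ v ∈ postfixedPoints Y T, u ≤ v ∧ ∀ w ∈ postfixedPoints Y T, v ≤ w → v = w := by
  by_contra! hnomax
  let M := {x ∈ postfixedPoints Y T | u ≤ x}
  have : ∀ x, ∃ y, x ∈ M → y ∈ postfixedPoints Y T ∧ x < y := fun x =>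
    (em (x ∈ M)).elim (fun hx => (hnomax x hx.1 hx.2).imp fun _ ⟨hy, hxy, hne⟩ _ =>
      ⟨hy, hxy.lt_of_ne hne⟩) fun hx => ⟨x, fun h => absurd h hx⟩
  choose W hW using this
  have : ∀ x, ∃ l, x ∈ postfixedPoints Y T → IsOrbitLimit D T x l := fun x =>
    (em (x ∈ postfixedPoints Y T)).elim
      (fun hx => (exists_isOrbitLimit hTY hT hd03 hx).imp fun _ h _ => h)
      fun hx => ⟨x, fun h => absurd h hx⟩
  choose orbitLimit hlim using this
  have hf x (hx : x ∈ M) : orbitLimit (W x) ∈ M ∧ x < orbitLimit (W x) := by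
    obtain ⟨hWP, hxW⟩ := hW x hx
    have hWl := (hlim _ hWP).iterate_le hic hTY hT hWP 0
    have hxl := hxW.trans_le hWl
    exact ⟨⟨(hlim _ hWP).mem hic hY hTY hT hWP, hx.2.trans hxl.le⟩, hxl⟩
  have hseq : HasSeqLimits D M fun x => orbitLimit (W x) := by
    intro a haM ha
    obtain ⟨L, hLP, hL, hconv⟩ := exists_isLUB_of_isOrbitLimit hD hic hY hTY hT hd03
      (fun n => (hW _ (haM n)).1) (fun n => hlim _ (hW _ (haM n)).1)
      fun n => (ha n).trans (hW _ (haM (n + 1))).2.le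
    exact ⟨L, ⟨hLP, (haM 0).2.trans ((hf _ (haM 0)).2.le.trans (hL.1 (mem_range_self 0)))⟩,
      hL, hconv⟩
  obtain ⟨x, hxM, hfx⟩ := hseq.exists_apply_eq hD hDsuff (fun x hx => (hf x hx).1)
    (fun x hx => (hf x hx).2.le) (x₀ := u) ⟨hu, le_rfl⟩
  exact (hf x hxM).2.ne' hfx

end Comparison

theorem comparison_fixed_point_d03_general {X : Type*} [PartialOrder X]
    (D : ℕ → X → X → ℝ)
    (hD0 : ∀ i (x : X), D i x x = 0)
    (hDsymm : ∀ i (x y : X), D i x y = D i y x)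
    (hDtri : ∀ i (x y z : X), D i x z ≤ D i x y + D i y z)
    (hDsuff : ∀ x y : X, (∀ i, D i x y = 0) → x = y)
    (hic : IntervalClosed D)
    (Y : Set X) (hYclosed : OrderClosed D Y)
    (T : X → X) (hTY : ∀ x ∈ Y, T x ∈ Y)
    (hTincr : ∀ x ∈ Y, ∀ y ∈ Y, x ≤ y → T x ≤ T y)
    (hd03 : ∀ (x : ℕ → X) (k : ℕ → ℕ), StrictMono k →
      (∀ n, x n ∈ Y) → (∀ i j : ℕ, i ≤ j → x i ≤ x j) →
      (∀ n, x n ∈ T^[k n] '' {x ∈ Y | x ≤ T x}) →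
      RelCompactSeq D x) :
    ∀ u ∈ ({x ∈ Y | x ≤ T x} : Set X), ∃ v ∈ Y, T v = v ∧ u ≤ v ∧
      ∀ w ∈ ({x ∈ Y | x ≤ T x} : Set X), v ≤ w → v = w := by
  intro u hu
  obtain ⟨v, hv, huv, hmax⟩ := exists_maximal_postfixedPoint ⟨hD0, hDsymm, hDtri⟩ hDsuff hic
    hYclosed hTY hTincr
    (fun x k hk hxY hx => hd03 x k hk hxY fun _ _ h => hx h) hu
  have hTv : T v ∈ postfixedPoints Y T := iterate_mem_postfixedPoints hTY hTincr hv 1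
  exact ⟨v, hv.1, (hmax _ hTv hv.2).symm, huv, hmax⟩

/-- Theorem 6 (first main result, 1986): under hypothesis (d03), every solution
`u` of `x ≤ Tx` is dominated by a fixed point `v` of `T` which is maximal with
respect to solutions of `x ≤ Tx`. -/
theorem comparison_fixed_point_d03 {X : Type*} [PartialOrder X] [Nonempty X]
    (D : ℕ → X → X → ℝ)
    (hD0 : ∀ i (x : X), D i x x = 0)
    (hDsymm : ∀ i (x y : X), D i x y = D i y x)
    (hDtri : ∀ i (x y z : X), D i x z ≤ D i x y + D i y z)
    (hDsuff : ∀ x y : X, (∀ i, D i x y = 0) → x = y)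
    (hic : IntervalClosed D)
    (Y : Set X) (hYclosed : OrderClosed D Y)
    (T : X → X) (hTY : ∀ x ∈ Y, T x ∈ Y)
    (hTincr : ∀ x ∈ Y, ∀ y ∈ Y, x ≤ y → T x ≤ T y)
    (hne : ({x ∈ Y | x ≤ T x} : Set X).Nonempty)
    (hd03 : ∀ (x : ℕ → X) (k : ℕ → ℕ), StrictMono k →
      (∀ n, x n ∈ Y) → (∀ i j : ℕ, i ≤ j → x i ≤ x j) →
      (∀ n, x n ∈ T^[k n] '' {x ∈ Y | x ≤ T x}) →
      RelCompactSeq D x) :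
    ∀ u ∈ ({x ∈ Y | x ≤ T x} : Set X), ∃ v ∈ Y, T v = v ∧ u ≤ v ∧
      ∀ w ∈ ({x ∈ Y | x ≤ T x} : Set X), v ≤ w → v = w :=
  comparison_fixed_point_d03_general D hD0 hDsymm hDtri hDsuff hic Y hYclosed T hTY hTincr hd03
end

section
/- Let (X,D,≤) be an ordered metrizable uniform space with ≤ interval-closed and X order complete (every increasing D-Cauchy sequence D-converges). Let Y be an order-closed subset of X, T : Y → Y an increasing map, and Y_oi = {x ∈ Y : x ≤ Tx} nonempty. Assume (d09): for each i ∈ ℕ there is an increasing function f_i : [0,∞) → [0,∞) with f_i^n(t) → 0 as n → ∞ for every t > 0, such that d_i(Tx,Ty) ≤ f_i(d_i(x,y)) whenever x,y ∈ Y with x ≤ y (e.g. f_i(t) = sup{d_i(Tx,Ty) : x ≤ y, d_i(x,y) ≤ t}, assumed finite for all t). Then for every u ∈ Y_oi there exists v ∈ Y with v = Tv such that (a) u ≤ v, and (b) whenever w ∈ Y_oi satisfies v ≤ w, one has v = w. -/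
open Filter Topology

/-- `D`-Cauchy property of a sequence. -/
def DCauchy {X : Type*} (D : ℕ → X → X → ℝ) (x : ℕ → X) : Prop :=
  ∀ i : ℕ, ∀ ε : ℝ, 0 < ε → ∃ N : ℕ, ∀ m ≥ N, ∀ n ≥ N, D i (x m) (x n) < ε

/-! The orbit `xₙ = T^[n] u` of a point with `u ≤ T u` is increasing, and Matkowski's argument
(`f t < t` for `t > 0`) makes it `D`-Cauchy. Its limit `v` lies above every `xₙ` because the
upper intervals are order closed, and `d (T xₙ) (T v) ≤ f (d xₙ v) ≤ d xₙ v` forces `T v = v`.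
If `v ≤ w ≤ T w`, the increasing orbit of `w` stays contracted towards `T^[n] v = v`, so `w ≤ v`. -/

open Set

structure IsPseudometric {X : Type*} (d : X → X → ℝ) : Prop where
  self_eq_zero : ∀ x, d x x = 0
  symm : ∀ x y, d x y = d y x
  triangle : ∀ x y z, d x z ≤ d x y + d y z

/-- Matkowski's condition (d09) on the control function of a contraction. -/
structure IsComparisonFunction (f : ℝ → ℝ) : Prop where
  monotoneOn : MonotoneOn f (Ici 0)
  tendsto_iterate : ∀ t, 0 < t → Tendsto (fun n => f^[n] t) atTop (𝓝 0)

namespace IsComparisonFunction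

variable {f : ℝ → ℝ}

theorem lt_self (hf : IsComparisonFunction f) {t : ℝ} (ht : 0 < t) : f t < t := by
  by_contra! h
  have hle : ∀ n, t ≤ f^[n] t := by
    intro n
    induction n with
    | zero => exact le_rfl
    | succ n ih =>
      rw [Function.iterate_succ_apply']
      exact h.trans (hf.monotoneOn ht.le (ht.le.trans ih) ih)
  obtain ⟨n, hn⟩ := ((hf.tendsto_iterate t ht).eventually (gt_mem_nhds ht)).exists
  exact (hle n).not_gt hn

theorem le_self (hf : IsComparisonFunction f) {t : ℝ} (ht : 0 ≤ t) : f t ≤ t := by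
  rcases ht.eq_or_lt with rfl | ht
  · refine le_of_forall_pos_lt_add fun s hs => ?_
    rw [zero_add]
    exact (hf.monotoneOn self_mem_Ici hs.le hs.le).trans_lt (hf.lt_self hs)
  · exact (hf.lt_self ht).le

end IsComparisonFunction

namespace IsPseudometric

variable {X : Type*} {d : X → X → ℝ}

theorem nonneg (hd : IsPseudometric d) (x y : X) : 0 ≤ d x y := by
  have := hd.triangle x y x
  rw [hd.self_eq_zero, hd.symm y x] at this
  linarith

theorem cauchy_of_contractive (hd : IsPseudometric d) {f : ℝ → ℝ} (hf : MonotoneOn f (Ici 0))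
    (hlt : ∀ t, 0 < t → f t < t) {x : ℕ → X}
    (hstep : Tendsto (fun n => d (x n) (x (n + 1))) atTop (𝓝 0))
    (hcontr : ∀ n m, n ≤ m → d (x (n + 1)) (x (m + 1)) ≤ f (d (x n) (x m))) :
    ∀ ε, 0 < ε → ∃ N, ∀ m ≥ N, ∀ n ≥ N, d (x m) (x n) < ε := by
  intro ε hε
  have hε2 : 0 < ε / 2 := half_pos hε
  obtain ⟨N, hN⟩ := (hstep.eventually (gt_mem_nhds (sub_pos.2 (hlt _ hε2)))).exists
  -- Once `d (x N) (x (N + 1)) < ε / 2 - f (ε / 2)`, the tail stays in the ball of radius `ε / 2`.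
  have hball : ∀ m ≥ N, d (x N) (x m) < ε / 2 := by
    intro m hm
    induction m, hm using Nat.le_induction with
    | base => rw [hd.self_eq_zero]; exact hε2
    | succ m hm ih =>
      calc d (x N) (x (m + 1)) ≤ d (x N) (x (N + 1)) + d (x (N + 1)) (x (m + 1)) :=
            hd.triangle _ _ _
        _ < (ε / 2 - f (ε / 2)) + f (ε / 2) :=
            add_lt_add_of_lt_of_le hN ((hcontr N m hm).trans (hf (hd.nonneg _ _) hε2.le ih.le))
        _ = ε / 2 := by ring
  refine ⟨N, fun m hm n hn => ?_⟩
  calc d (x m) (x n) ≤ d (x m) (x N) + d (x N) (x n) := hd.triangle _ _ _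
    _ = d (x N) (x m) + d (x N) (x n) := by rw [hd.symm (x m)]
    _ < ε / 2 + ε / 2 := add_lt_add (hball m hm) (hball n hn)
    _ = ε := add_halves ε

end IsPseudometric

theorem dConv_unique {X : Type*} {D : ℕ → X → X → ℝ} (hD : ∀ i, IsPseudometric (D i))
    (hsuff : ∀ x y : X, (∀ i, D i x y = 0) → x = y) {x : ℕ → X} {l l' : X}
    (hl : DConv D x l) (hl' : DConv D x l') : l = l' := by
  refine hsuff l l' fun i => le_antisymm ?_ ((hD i).nonneg l l')
  have hsum : Tendsto (fun n => D i (x n) l + D i (x n) l') atTop (𝓝 0) := by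
    simpa using (hl i).add (hl' i)
  refine ge_of_tendsto' hsum fun n => ?_
  calc D i l l' ≤ D i l (x n) + D i (x n) l' := (hD i).triangle _ _ _
    _ = D i (x n) l + D i (x n) l' := by rw [(hD i).symm l]

theorem le_of_dConv {X : Type*} [PartialOrder X] {D : ℕ → X → X → ℝ}
    (hic : ∀ a : X, OrderClosed D {y | a ≤ y}) {x : ℕ → X} (hx : Monotone x) {l : X}
    (hl : DConv D x l) (n : ℕ) : x n ≤ l :=
  hic (x n) (fun m => x (m + n)) l (fun m => hx (Nat.le_add_left n m))
    (fun _ _ hij => hx (Nat.add_le_add_right hij n))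
    fun i => (hl i).comp (tendsto_add_atTop_nat n)

section Iterates

variable {X : Type*} [PartialOrder X] {Y : Set X} {T : X → X}

theorem iterate_le_iterate (hTY : MapsTo T Y Y) (hT : MonotoneOn T Y) {a b : X} (ha : a ∈ Y)
    (hb : b ∈ Y) (hab : a ≤ b) (n : ℕ) : T^[n] a ≤ T^[n] b := by
  induction n with
  | zero => exact hab
  | succ n ih =>
    simp only [Function.iterate_succ_apply']
    exact hT (hTY.iterate n ha) (hTY.iterate n hb) ih

theorem monotone_iterate_of_le_map (hTY : MapsTo T Y Y) (hT : MonotoneOn T Y) {a : X}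
    (ha : a ∈ Y) (haT : a ≤ T a) : Monotone fun n => T^[n] a :=
  monotone_nat_of_le_succ fun n => by
    rw [Function.iterate_succ_apply]
    exact iterate_le_iterate hTY hT ha (hTY ha) haT n

variable {d : X → X → ℝ} {f : ℝ → ℝ}

theorem dist_iterate_le (hd : ∀ x y, 0 ≤ d x y) (hTY : MapsTo T Y Y) (hT : MonotoneOn T Y)
    (hf : MonotoneOn f (Ici 0)) (hcontr : ∀ x ∈ Y, ∀ y ∈ Y, x ≤ y → d (T x) (T y) ≤ f (d x y))
    {a b : X} (ha : a ∈ Y) (hb : b ∈ Y) (hab : a ≤ b) {t : ℝ} (ht : d a b ≤ t) (n : ℕ) :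
    d (T^[n] a) (T^[n] b) ≤ f^[n] t := by
  induction n with
  | zero => exact ht
  | succ n ih =>
    simp only [Function.iterate_succ_apply']
    exact (hcontr _ (hTY.iterate n ha) _ (hTY.iterate n hb) (iterate_le_iterate hTY hT ha hb hab n)).trans
      (hf (hd _ _) ((hd _ _).trans ih) ih)

theorem tendsto_dist_iterate (hd : ∀ x y, 0 ≤ d x y) (hTY : MapsTo T Y Y) (hT : MonotoneOn T Y)
    (hf : IsComparisonFunction f)
    (hcontr : ∀ x ∈ Y, ∀ y ∈ Y, x ≤ y → d (T x) (T y) ≤ f (d x y))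
    {a b : X} (ha : a ∈ Y) (hb : b ∈ Y) (hab : a ≤ b) :
    Tendsto (fun n => d (T^[n] a) (T^[n] b)) atTop (𝓝 0) :=
  -- `f^[n] 0` need not tend to `0`, so compare with the orbit of the positive `d a b + 1`.
  squeeze_zero (fun _ => hd _ _)
    (dist_iterate_le hd hTY hT hf.monotoneOn hcontr ha hb hab (le_add_of_nonneg_right zero_le_one))
    (hf.tendsto_iterate _ (add_pos_of_nonneg_of_pos (hd a b) one_pos))

theorem cauchy_iterate (hd : IsPseudometric d) (hTY : MapsTo T Y Y) (hT : MonotoneOn T Y)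
    (hf : IsComparisonFunction f)
    (hcontr : ∀ x ∈ Y, ∀ y ∈ Y, x ≤ y → d (T x) (T y) ≤ f (d x y))
    {u : X} (hu : u ∈ Y) (huT : u ≤ T u) :
    ∀ ε, 0 < ε → ∃ N, ∀ m ≥ N, ∀ n ≥ N, d (T^[m] u) (T^[n] u) < ε := by
  refine hd.cauchy_of_contractive hf.monotoneOn (fun _ => hf.lt_self) ?_ fun n m hnm => ?_
  · simpa only [Function.iterate_succ_apply] using
      tendsto_dist_iterate hd.nonneg hTY hT hf hcontr hu (hTY hu) huT
  · simp only [Function.iterate_succ_apply']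
    exact hcontr _ (hTY.iterate n hu) _ (hTY.iterate m hu)
      (monotone_iterate_of_le_map hTY hT hu huT hnm)

theorem tendsto_dist_map (hd : ∀ x y, 0 ≤ d x y) (hf : IsComparisonFunction f)
    (hcontr : ∀ x ∈ Y, ∀ y ∈ Y, x ≤ y → d (T x) (T y) ≤ f (d x y))
    {x : ℕ → X} {v : X} (hxY : ∀ n, x n ∈ Y) (hvY : v ∈ Y) (hxv : ∀ n, x n ≤ v)
    (hxv' : Tendsto (fun n => d (x n) v) atTop (𝓝 0)) :
    Tendsto (fun n => d (T (x n)) (T v)) atTop (𝓝 0) :=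
  squeeze_zero (fun _ => hd _ _)
    (fun n => (hcontr _ (hxY n) _ hvY (hxv n)).trans (hf.le_self (hd _ _))) hxv'

end Iterates

theorem comparison_fixed_point_d09_general {X : Type*} [PartialOrder X]
    (D : ℕ → X → X → ℝ)
    (hD0 : ∀ i (x : X), D i x x = 0)
    (hDsymm : ∀ i (x y : X), D i x y = D i y x)
    (hDtri : ∀ i (x y z : X), D i x z ≤ D i x y + D i y z)
    (hDsuff : ∀ x y : X, (∀ i, D i x y = 0) → x = y)
    (hic : IntervalClosed D)
    (hordercomplete : ∀ z : ℕ → X, (∀ i j : ℕ, i ≤ j → z i ≤ z j) →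
      DCauchy D z → ∃ l : X, DConv D z l)
    (Y : Set X) (hYclosed : OrderClosed D Y)
    (T : X → X) (hTY : ∀ x ∈ Y, T x ∈ Y)
    (hTincr : ∀ x ∈ Y, ∀ y ∈ Y, x ≤ y → T x ≤ T y)
    (hd09 : ∀ i : ℕ, ∃ f : ℝ → ℝ,
      (∀ t : ℝ, 0 ≤ t → 0 ≤ f t) ∧
      (∀ s t : ℝ, 0 ≤ s → s ≤ t → f s ≤ f t) ∧
      (∀ t : ℝ, 0 < t → Tendsto (fun n => f^[n] t) atTop (𝓝 0)) ∧
      (∀ x ∈ Y, ∀ y ∈ Y, x ≤ y → D i (T x) (T y) ≤ f (D i x y))) :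
    ∀ u ∈ ({x ∈ Y | x ≤ T x} : Set X), ∃ v ∈ Y, T v = v ∧ u ≤ v ∧
      ∀ w ∈ ({x ∈ Y | x ≤ T x} : Set X), v ≤ w → v = w := by
  have hD : ∀ i, IsPseudometric (D i) := fun i => ⟨hD0 i, hDsymm i, hDtri i⟩
  choose f _ hfmono hflim hcontr using hd09
  have hf : ∀ i, IsComparisonFunction (f i) :=
    fun i => ⟨fun s hs t _ hst => hfmono i s t hs hst, hflim i⟩
  have hT : MonotoneOn T Y := fun x hx y hy => hTincr x hx y hy
  have hic' : ∀ a, OrderClosed D {y | a ≤ y} := fun a => (hic a).1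
  rintro u ⟨huY, huT⟩
  have hxY : ∀ n, T^[n] u ∈ Y := fun n => MapsTo.iterate hTY n huY
  have hx := monotone_iterate_of_le_map hTY hT huY huT
  obtain ⟨v, hv⟩ := hordercomplete _ (fun _ _ h => hx h)
    fun i => cauchy_iterate (hD i) hTY hT (hf i) (hcontr i) huY huT
  have hvY : v ∈ Y := hYclosed _ v hxY (fun _ _ h => hx h) hv
  have hxv := le_of_dConv hic' hx hv
  have hTv : T v = v := by
    refine dConv_unique hD hDsuff (x := fun n => T^[n + 1] u) (fun i => ?_)
      fun i => (hv i).comp (tendsto_add_atTop_nat 1)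
    simpa only [Function.iterate_succ_apply'] using
      tendsto_dist_map (hD i).nonneg (hf i) (hcontr i) hxY hvY hxv (hv i)
  refine ⟨v, hvY, hTv, hxv 0, fun w ⟨hwY, hwT⟩ hvw => le_antisymm hvw ?_⟩
  have hw : DConv D (fun n => T^[n] w) v := fun i => by
    simpa only [Function.iterate_fixed hTv, (hD i).symm v] using
      tendsto_dist_iterate (hD i).nonneg hTY hT (hf i) (hcontr i) hvY hwY hvw
  exact le_of_dConv hic' (monotone_iterate_of_le_map hTY hT hwY hwT) hw 0

/-- Theorem 9: the comparison fixed point theorem under order completeness (d08)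
and the Matkowski-type contractive condition (d09). -/
theorem comparison_fixed_point_d09 {X : Type*} [PartialOrder X] [Nonempty X]
    (D : ℕ → X → X → ℝ)
    (hD0 : ∀ i (x : X), D i x x = 0)
    (hDsymm : ∀ i (x y : X), D i x y = D i y x)
    (hDtri : ∀ i (x y z : X), D i x z ≤ D i x y + D i y z)
    (hDsuff : ∀ x y : X, (∀ i, D i x y = 0) → x = y)
    (hic : IntervalClosed D)
    (hordercomplete : ∀ z : ℕ → X, (∀ i j : ℕ, i ≤ j → z i ≤ z j) →
      DCauchy D z → ∃ l : X, DConv D z l)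
    (Y : Set X) (hYclosed : OrderClosed D Y)
    (T : X → X) (hTY : ∀ x ∈ Y, T x ∈ Y)
    (hTincr : ∀ x ∈ Y, ∀ y ∈ Y, x ≤ y → T x ≤ T y)
    (hne : ({x ∈ Y | x ≤ T x} : Set X).Nonempty)
    (hd09 : ∀ i : ℕ, ∃ f : ℝ → ℝ,
      (∀ t : ℝ, 0 ≤ t → 0 ≤ f t) ∧
      (∀ s t : ℝ, 0 ≤ s → s ≤ t → f s ≤ f t) ∧
      (∀ t : ℝ, 0 < t → Tendsto (fun n => f^[n] t) atTop (𝓝 0)) ∧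
      (∀ x ∈ Y, ∀ y ∈ Y, x ≤ y → D i (T x) (T y) ≤ f (D i x y))) :
    ∀ u ∈ ({x ∈ Y | x ≤ T x} : Set X), ∃ v ∈ Y, T v = v ∧ u ≤ v ∧
      ∀ w ∈ ({x ∈ Y | x ≤ T x} : Set X), v ≤ w → v = w :=
  comparison_fixed_point_d09_general D hD0 hDsymm hDtri hDsuff hic hordercomplete Y hYclosed T hTY
    hTincr hd09
end
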